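/- Let f : ℝ^n → Δ^n be continuous and let E : ℝ^n → ℝ be differentiable. Suppose that for every initial state q⁰ ∈ ℝ^n, every continuous payoff stream p : [0,∞) → ℝ^n, and every t ≥ 0, E(q(t)) = E(q⁰) + ∫₀ᵗ ⟨f(q(τ)), p(τ)⟩ dτ, where q(t) = q⁰ + ∫₀ᵗ p(τ) dτ. Then ∇E(q) = f(q) for every q ∈ ℝ^n; in particular ∇E(q) ∈ Δ^n, i.e. ∇E(q) has nonnegative entries and ⟨∇E(q), 𝟙⟩ = 1, for every q. -/

import Mathlib

/-!
Taking the constant payoff stream `p ≡ v`, the lossless identity says that along the ray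
`t ↦ q + t • v` the storage `E` is the integral of `⟪f, v⟫`, so by the fundamental theorem of
calculus its right derivative at `t = 0` is `⟪f q, v⟫`. Since `E` is differentiable, this right
derivative is also `⟪∇E q, v⟫`; as `v` is arbitrary, `∇E q = f q`, which lies in the simplex.
-/

open scoped BigOperators RealInnerProductSpace
open MeasureTheory

noncomputable section

abbrev Vec (n : ℕ) := EuclideanSpace ℝ (Fin n)

/-- The standard probability simplex in ℝⁿ. -/
def simplex (n : ℕ) : Set (Vec n) := {x | (∀ j, 0 ≤ x j) ∧ ∑ j, x j = 1}

/-- The all-ones vector 𝟙 ∈ ℝⁿ. -/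
def ones (n : ℕ) : Vec n := WithLp.toLp 2 (fun _ => 1)

open Set

section RayDerivative

variable {F : Type*} [NormedAddCommGroup F] [InnerProductSpace ℝ F]

theorem hasDerivAt_comp_ray_of_differentiableAt [CompleteSpace F] {E : F → ℝ} {q : F}
    (hE : DifferentiableAt ℝ E q) (v : F) :
    HasDerivAt (fun t : ℝ => E (q + t • v)) ⟪gradient E q, v⟫ 0 := by
  have hray : HasDerivAt (fun t : ℝ => q + t • v) v 0 := by
    simpa using ((hasDerivAt_id (0 : ℝ)).smul_const v).const_add q
  have hE' : HasFDerivAt E (InnerProductSpace.toDual ℝ F (gradient E q)) (q + (0 : ℝ) • v) := by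
    simpa using hE.hasGradientAt.hasFDerivAt
  simpa [InnerProductSpace.toDual_apply_apply, Function.comp_def] using
    hE'.comp_hasDerivAt 0 hray

theorem gradient_eq_of_hasDerivWithinAt_Ici [CompleteSpace F] {E : F → ℝ} {q g : F}
    (hE : DifferentiableAt ℝ E q)
    (h : ∀ v, HasDerivWithinAt (fun t : ℝ => E (q + t • v)) ⟪g, v⟫ (Ici 0) 0) :
    gradient E q = g :=
  ext_inner_right ℝ fun v =>
    (uniqueDiffOn_Ici (0 : ℝ) 0 self_mem_Ici).eq_deriv _
      (hasDerivAt_comp_ray_of_differentiableAt hE v).hasDerivWithinAt (h v)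

theorem hasDerivWithinAt_Ici_of_eq_integral {E : F → ℝ} {φ : F → F} (hφ : Continuous φ)
    {q v : F}
    (h : ∀ t, 0 ≤ t → E (q + t • v) = E q + ∫ τ in (0 : ℝ)..t, ⟪φ (q + τ • v), v⟫) :
    HasDerivWithinAt (fun t : ℝ => E (q + t • v)) ⟪φ q, v⟫ (Ici 0) 0 := by
  have hcont : Continuous fun τ : ℝ => ⟪φ (q + τ • v), v⟫ := by fun_prop
  have hFTC : HasDerivAt (fun t : ℝ => E q + ∫ τ in (0 : ℝ)..t, ⟪φ (q + τ • v), v⟫)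
      ⟪φ q, v⟫ 0 := by
    simpa using (intervalIntegral.integral_hasDerivAt_right (hcont.intervalIntegrable 0 0)
      (hcont.stronglyMeasurableAtFilter _ _) hcont.continuousAt).const_add (E q)
  exact hFTC.hasDerivWithinAt.congr (fun t ht => h t ht) (h 0 le_rfl)

end RayDerivative

theorem inner_ones_of_mem_simplex {n : ℕ} {x : Vec n} (hx : x ∈ simplex n) :
    ⟪x, ones n⟫ = 1 := by
  simp [PiLp.inner_apply, ones, hx.2]

theorem lossless_storage_gradient_eq_conversion
    (n : ℕ) (f : Vec n → Vec n) (hfc : Continuous f) (hf : ∀ q, f q ∈ simplex n)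
    (E : Vec n → ℝ) (hE : Differentiable ℝ E)
    (hloss : ∀ (q0 : Vec n) (p : ℝ → Vec n), Continuous p → ∀ t : ℝ, 0 ≤ t →
      E (q0 + ∫ τ in (0:ℝ)..t, p τ) = E q0 +
        ∫ τ in (0:ℝ)..t, ⟪f (q0 + ∫ σ in (0:ℝ)..τ, p σ), p τ⟫) :
    ∀ q : Vec n, gradient E q = f q ∧
      (∀ j, 0 ≤ gradient E q j) ∧ ⟪gradient E q, ones n⟫ = 1 := by
  intro q
  have hgrad : gradient E q = f q := by
    refine gradient_eq_of_hasDerivWithinAt_Ici (hE q) fun v => ?_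
    refine hasDerivWithinAt_Ici_of_eq_integral hfc fun t ht => ?_
    simpa using hloss q (fun _ => v) continuous_const t ht
  rw [hgrad]
  exact ⟨rfl, (hf q).1, inner_ones_of_mem_simplex (hf q)⟩
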